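/- Let f ∈ 1 + xF_p[[x]] be an endomorphism of the 1-units that is not a rational function of x, and suppose f is not a p-th power in F_p[[x]]. Then the linear coefficient a_1 of f is nonzero, and g defined by f(1+x) = (1+x)^{a_1} g(1+x) is an endomorphism of the 1-units whose linear coefficient is zero, hence g is a p-th power of an endomorphism. -/

import Mathlib

/-!
Write `F(u) = f(u - 1)` for a 1-unit `u`. Specialising `F((1 + X)(1 + X^N)) = F(1 + X) F(1 + X^N)`
and expanding both sides modulo `X^{2N}` (Taylor to first order on the left,
`f(X^N) ≡ 1 + a₁ X^N` on the right) gives `X^N ∣ (1 + X) f' - a₁ f` for every `N`, hence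
`(1 + X) f' = a₁ f`. If `a₁ = 0` then `f' = 0`, so in characteristic `p` only exponents divisible
by `p` occur and `f` is a `p`-th power; Frobenius being injective, the `p`-th root is again an
endomorphism. This rules out `a₁ = 0` for `f` and applies to `g = (1 + X)^{-a₁} f`, an
endomorphism (a quotient of two) with vanishing linear term.
-/

open PowerSeries

/-- Coefficientwise substitution of a power series `x` with zero constant term into `f`. -/
noncomputable def applySeries {R : Type*} [CommRing R] (f x : PowerSeries R) : PowerSeries R :=
  PowerSeries.mk fun k => ∑ n ∈ Finset.range (k + 1), coeff (R := R) n f * coeff (R := R) k (x ^ n)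

/-- `f ∈ 1 + x R[[x]]` defines an endomorphism of the group of 1-units. -/
def IsOneUnitEndo {R : Type*} [CommRing R] (f : PowerSeries R) : Prop :=
  constantCoeff (R := R) f = 1 ∧
    ∀ u v : PowerSeries R, constantCoeff (R := R) u = 1 → constantCoeff (R := R) v = 1 →
      applySeries f (u * v - 1) = applySeries f (u - 1) * applySeries f (v - 1)

/-- A power series is rational if it equals `P/Q` for polynomials `P, Q`. -/
def IsRationalPS {R : Type*} [CommRing R] (f : PowerSeries R) : Prop :=
  ∃ P Q : Polynomial R, Q ≠ 0 ∧ (Q : PowerSeries R) * f = (P : PowerSeries R)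

section CommRing

variable {R : Type*} [CommRing R]

namespace PowerSeries

theorem constantCoeff_sub_one {u : R⟦X⟧} (hu : constantCoeff u = 1) :
    constantCoeff (u - 1) = 0 := by
  rw [map_sub, hu, map_one, sub_self]

theorem hasSubst_sub_one {u : R⟦X⟧} (hu : constantCoeff u = 1) : HasSubst (u - 1) :=
  HasSubst.of_constantCoeff_zero' (constantCoeff_sub_one hu)

theorem coe_eq_aeval_X (P : Polynomial R) : (P : R⟦X⟧) = Polynomial.aeval X P := by
  rw [← subst_coe HasSubst.X', X_subst]

theorem sq_dvd_aeval_X_add_sub (P : Polynomial R) (t : R⟦X⟧) :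
    t ^ 2 ∣ Polynomial.aeval (X + t) P - P - (↑(Polynomial.derivative P) : R⟦X⟧) * t := by
  obtain ⟨k, hk⟩ := (P.map (algebraMap R R⟦X⟧)).binomExpansion X t
  rw [Polynomial.derivative_map, Polynomial.eval_map_algebraMap, Polynomial.eval_map_algebraMap,
    Polynomial.eval_map_algebraMap, ← coe_eq_aeval_X, ← coe_eq_aeval_X] at hk
  exact ⟨k, by rw [hk]; ring⟩

theorem X_pow_two_mul_dvd_subst_X_add_sub {N : ℕ} (hN : N ≠ 0) {t : R⟦X⟧} (ht : X ^ N ∣ t)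
    (f : R⟦X⟧) : X ^ (2 * N) ∣ f.subst (X + t) - f - d⁄dX R f * t := by
  have hX : (X : R⟦X⟧) ∣ X + t := dvd_add dvd_rfl ((dvd_pow_self X hN).trans ht)
  have hsubst : HasSubst (X + t) := HasSubst.of_constantCoeff_zero' (X_dvd_iff.mp hX)
  set P : Polynomial R := trunc (2 * N) f
  set g : R⟦X⟧ := mk fun i ↦ coeff (i + 2 * N) f
  have hf : f = X ^ (2 * N) * g + (P : R⟦X⟧) := eq_X_pow_mul_shift_add_trunc _ f
  have hP : X ^ (2 * N) ∣ Polynomial.aeval (X + t) P - (P : R⟦X⟧)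
      - (Polynomial.derivative P : R⟦X⟧) * t := by
    rw [mul_comm, pow_mul]
    exact (pow_dvd_pow_of_dvd ht 2).trans (sq_dvd_aeval_X_add_sub P t)
  have hderiv : X ^ (2 * N) ∣ d⁄dX R (X ^ (2 * N) * g) * t := by
    rw [Derivation.leibniz, derivative_pow, derivative_X, smul_eq_mul, smul_eq_mul, add_mul]
    refine dvd_add (dvd_mul_of_dvd_left (dvd_mul_right _ _) _) ?_
    calc X ^ (2 * N) ∣ X ^ (2 * N - 1) * X ^ N := by rw [← pow_add]; exact pow_dvd_pow X (by omega)
      _ ∣ g * (↑(2 * N) * X ^ (2 * N - 1) * 1) * t :=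
        mul_dvd_mul (Dvd.intro_left (g * ↑(2 * N)) (by ring)) ht
  rw [hf, subst_add hsubst, subst_mul hsubst, subst_pow hsubst, subst_X hsubst,
    subst_coe hsubst, map_add, derivative_coe]
  have hsplit : (X + t) ^ (2 * N) * g.subst (X + t) + Polynomial.aeval (X + t) P
      - (X ^ (2 * N) * g + (P : R⟦X⟧))
      - (d⁄dX R (X ^ (2 * N) * g) + (Polynomial.derivative P : R⟦X⟧)) * t
      = (Polynomial.aeval (X + t) P - (P : R⟦X⟧) - (Polynomial.derivative P : R⟦X⟧) * t)
        + ((X + t) ^ (2 * N) * g.subst (X + t) - X ^ (2 * N) * g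
          - d⁄dX R (X ^ (2 * N) * g) * t) := by ring
  rw [hsplit]
  exact dvd_add hP (dvd_sub (dvd_sub (dvd_mul_of_dvd_left (pow_dvd_pow_of_dvd hX _) _)
    (dvd_mul_right _ _)) hderiv)

theorem sq_dvd_subst_sub {s : R⟦X⟧} (hs : HasSubst s) (f : R⟦X⟧) :
    s ^ 2 ∣ f.subst s - C (constantCoeff f) - C (coeff 1 f) * s := by
  set f₁ : R⟦X⟧ := mk fun i ↦ coeff (i + 1) f
  set f₂ : R⟦X⟧ := mk fun i ↦ coeff (i + 1) f₁
  have hc : constantCoeff f₁ = coeff 1 f := by simp [f₁]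
  have hf₁ : f₁ = X * f₂ + C (coeff 1 f) := hc ▸ eq_X_mul_shift_add_const f₁
  have hf : f = X ^ 2 * f₂ + C (coeff 1 f) * X + C (constantCoeff f) :=
    calc f = X * f₁ + C (constantCoeff f) := eq_X_mul_shift_add_const f
      _ = _ := by rw [hf₁]; ring
  have hfs : f.subst s = s ^ 2 * f₂.subst s + C (coeff 1 f) * s + C (constantCoeff f) := by
    conv_lhs => rw [hf]
    simp only [subst_add hs, subst_mul hs, subst_pow hs, subst_X hs, subst_C]
    rfl
  exact ⟨f₂.subst s, by rw [hfs]; ring⟩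

theorem eq_zero_of_forall_X_pow_dvd {f : R⟦X⟧} (h : ∀ N, X ^ N ∣ f) : f = 0 := by
  ext n
  exact X_pow_dvd_iff.mp (h (n + 1)) n (Nat.lt_succ_self n)

theorem X_pow_dvd_of_X_pow_mul_dvd {N : ℕ} {f : R⟦X⟧} (h : X ^ (2 * N) ∣ X ^ N * f) :
    X ^ N ∣ f := by
  obtain ⟨k, hk⟩ := h
  exact ⟨k, X_pow_mul_cancel (by rw [hk]; ring)⟩

theorem subst_one_add_X_pow {s : R⟦X⟧} (hs : HasSubst s) (a : ℕ) :
    ((1 + X : R⟦X⟧) ^ a).subst s = (1 + s) ^ a := by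
  rw [subst_pow hs, subst_add hs, subst_X hs, ← coe_substAlgHom hs, map_one]

theorem coeff_one_one_add_X_pow (a : ℕ) : coeff 1 ((1 + X : R⟦X⟧) ^ a) = a := by
  induction a with
  | zero => simp
  | succ a ih => simp [pow_succ, coeff_one_mul, ih]

theorem expand_eq_pow_map_frobeniusEquiv_symm (p : ℕ) [ExpChar R p] [PerfectRing R p]
    (hp : p ≠ 0) (f : R⟦X⟧) :
    expand p hp f = (map ((frobeniusEquiv R p).symm : R →+* R) f) ^ p := by
  have h := MvPowerSeries.map_frobenius_expand p hp
    (f := map ((frobeniusEquiv R p).symm : R →+* R) f)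
  change map (frobenius R p) (expand p hp _) = _ at h
  rw [← h, map_expand, ← RingHom.comp_apply, ← map_comp, frobenius_comp_frobeniusEquiv_symm,
    map_id]
  rfl

end PowerSeries

theorem applySeries_eq_subst (f : R⟦X⟧) {s : R⟦X⟧} (hs : constantCoeff s = 0) :
    applySeries f s = f.subst s := by
  ext k
  rw [applySeries, coeff_mk, coeff_subst' (HasSubst.of_constantCoeff_zero' hs)]
  refine (finsum_eq_sum_of_support_subset _ fun n hn => ?_).symm
  simp only [Function.mem_support, Finset.coe_range, Set.mem_Iio] at hn ⊢
  by_contra! hkn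
  have hpow : coeff k (s ^ n) = 0 := coeff_of_lt_order _
    ((Nat.cast_lt.mpr (by omega)).trans_le (le_order_pow_of_constantCoeff_eq_zero n hs))
  exact hn (by rw [hpow, mul_zero])

theorem isOneUnitEndo_iff {f : R⟦X⟧} : IsOneUnitEndo f ↔ constantCoeff f = 1 ∧
    ∀ u v : R⟦X⟧, constantCoeff u = 1 → constantCoeff v = 1 →
      f.subst (u * v - 1) = f.subst (u - 1) * f.subst (v - 1) := by
  refine and_congr_right fun _ => forall₂_congr fun u v => imp_congr_right fun hu =>
    imp_congr_right fun hv => ?_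
  have huv : constantCoeff (u * v) = 1 := by rw [map_mul, hu, hv, mul_one]
  rw [applySeries_eq_subst _ (constantCoeff_sub_one huv),
    applySeries_eq_subst _ (constantCoeff_sub_one hu),
    applySeries_eq_subst _ (constantCoeff_sub_one hv)]

theorem isOneUnitEndo_one_add_X_pow (a : ℕ) : IsOneUnitEndo ((1 + X : R⟦X⟧) ^ a) := by
  refine isOneUnitEndo_iff.mpr ⟨by simp, fun u v hu hv => ?_⟩
  have huv : constantCoeff (u * v) = 1 := by rw [map_mul, hu, hv, mul_one]
  rw [subst_one_add_X_pow (hasSubst_sub_one huv), subst_one_add_X_pow (hasSubst_sub_one hu),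
    subst_one_add_X_pow (hasSubst_sub_one hv), add_sub_cancel, add_sub_cancel, add_sub_cancel,
    mul_pow]

theorem IsOneUnitEndo.of_mul_left {e g : R⟦X⟧} (he : IsOneUnitEndo e)
    (heg : IsOneUnitEndo (e * g)) (hg : constantCoeff g = 1) : IsOneUnitEndo g := by
  rw [isOneUnitEndo_iff] at he heg ⊢
  refine ⟨hg, fun u v hu hv => ?_⟩
  have huv : constantCoeff (u * v) = 1 := by rw [map_mul, hu, hv, mul_one]
  have hunit : IsUnit (e.subst (u * v - 1)) := by
    rw [← coe_substAlgHom (hasSubst_sub_one huv)]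
    exact (isUnit_iff_constantCoeff.mpr (he.1 ▸ isUnit_one)).map _
  refine hunit.mul_left_cancel ?_
  have h := heg.2 u v hu hv
  rw [subst_mul (hasSubst_sub_one huv), subst_mul (hasSubst_sub_one hu),
    subst_mul (hasSubst_sub_one hv)] at h
  rw [h, he.2 u v hu hv]
  ring

theorem IsOneUnitEndo.subst_X_add_X_pow_mul {f : R⟦X⟧} (hf : IsOneUnitEndo f) {N : ℕ}
    (hN : N ≠ 0) : f.subst (X + X ^ N * (1 + X)) = f * f.subst (X ^ N) := by
  have h := (isOneUnitEndo_iff.mp hf).2 (1 + X) (1 + X ^ N) (by simp) (by simp [hN])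
  rwa [show (1 + X : R⟦X⟧) * (1 + X ^ N) - 1 = X + X ^ N * (1 + X) by ring, add_sub_cancel_left,
    add_sub_cancel_left, X_subst] at h

theorem IsOneUnitEndo.one_add_X_mul_derivative {f : R⟦X⟧} (hf : IsOneUnitEndo f) :
    (1 + X) * d⁄dX R f = C (coeff 1 f) * f := by
  rw [← sub_eq_zero]
  refine eq_zero_of_forall_X_pow_dvd fun N => ?_
  rcases eq_or_ne N 0 with rfl | hN
  · exact pow_zero (X : R⟦X⟧) ▸ one_dvd _
  apply X_pow_dvd_of_X_pow_mul_dvd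
  have hT := X_pow_two_mul_dvd_subst_X_add_sub hN (dvd_mul_right (X ^ N) (1 + X)) f
  have hL := sq_dvd_subst_sub (HasSubst.X_pow hN) f
  rw [← pow_mul, mul_comm N 2, hf.1, map_one] at hL
  rw [hf.subst_X_add_X_pow_mul hN] at hT
  have key : X ^ N * ((1 + X) * d⁄dX R f - C (coeff 1 f) * f)
      = f * (f.subst (X ^ N) - 1 - C (coeff 1 f) * X ^ N)
        - (f * f.subst (X ^ N) - f - d⁄dX R f * (X ^ N * (1 + X))) := by ring
  rw [key]
  exact dvd_sub (dvd_mul_of_dvd_right hL f) hT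

end CommRing

section CharP

variable {K : Type*} [Field K] {p : ℕ} [CharP K p]

theorem PowerSeries.coeff_eq_zero_of_derivative_eq_zero {f : K⟦X⟧} (hf : d⁄dX K f = 0) {n : ℕ}
    (hn : ¬ p ∣ n) : coeff n f = 0 := by
  obtain _ | m := n
  · exact absurd (dvd_zero p) hn
  have h := coeff_derivative f m
  rw [hf, map_zero, eq_comm, mul_eq_zero] at h
  refine h.resolve_right fun h0 => hn ?_
  exact_mod_cast (CharP.cast_eq_zero_iff K p (m + 1)).mp (by exact_mod_cast h0)

variable [Fact p.Prime]

theorem PowerSeries.exists_pow_eq_of_derivative_eq_zero [PerfectRing K p] {f : K⟦X⟧}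
    (hf : d⁄dX K f = 0) : ∃ h : K⟦X⟧, f = h ^ p := by
  have hp := (Fact.out : p.Prime).ne_zero
  refine ⟨map ((frobeniusEquiv K p).symm : K →+* K) (mk fun n => coeff (p * n) f), ?_⟩
  rw [← expand_eq_pow_map_frobeniusEquiv_symm p hp]
  ext n
  rw [coeff_expand]
  split_ifs with hn
  · rw [coeff_mk, Nat.mul_div_cancel' hn]
  · exact PowerSeries.coeff_eq_zero_of_derivative_eq_zero hf hn

theorem IsOneUnitEndo.of_pow {g : K⟦X⟧} (hg : IsOneUnitEndo (g ^ p)) : IsOneUnitEndo g := by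
  have : CharP K⟦X⟧ p := charP_of_injective_algebraMap (algebraMap K K⟦X⟧).injective p
  rw [isOneUnitEndo_iff] at hg ⊢
  refine ⟨frobenius_inj K p ?_, fun u v hu hv => frobenius_inj K⟦X⟧ p ?_⟩
  · simpa [frobenius_def] using hg.1
  · rw [frobenius_def, frobenius_def, ← subst_pow (hasSubst_sub_one (by simp [hu, hv])),
      mul_pow, ← subst_pow (hasSubst_sub_one hu), ← subst_pow (hasSubst_sub_one hv)]
    exact hg.2 u v hu hv

theorem IsOneUnitEndo.exists_pow_eq_of_coeff_one_eq_zero [PerfectRing K p] {f : K⟦X⟧}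
    (hf : IsOneUnitEndo f) (h1 : coeff 1 f = 0) : ∃ h : K⟦X⟧, IsOneUnitEndo h ∧ f = h ^ p := by
  have hunit : IsUnit (1 + X : K⟦X⟧) := isUnit_iff_constantCoeff.mpr (by simp)
  have hderiv : d⁄dX K f = 0 := by
    simpa [h1, hunit.mul_right_eq_zero] using hf.one_add_X_mul_derivative
  obtain ⟨h, rfl⟩ := exists_pow_eq_of_derivative_eq_zero hderiv
  exact ⟨h, hf.of_pow, rfl⟩

end CharP

theorem not_rational_not_pth_power_general {p : ℕ} [Fact p.Prime]
    (f : PowerSeries (ZMod p)) (hf : IsOneUnitEndo f)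
    (hpow : ¬ ∃ g : PowerSeries (ZMod p), f = g ^ p) :
    coeff (R := ZMod p) 1 f ≠ 0 ∧
      ∃ g : PowerSeries (ZMod p), IsOneUnitEndo g ∧
        f = (1 + X) ^ (ZMod.val (coeff (R := ZMod p) 1 f)) * g ∧
        coeff (R := ZMod p) 1 g = 0 ∧
        ∃ h : PowerSeries (ZMod p), IsOneUnitEndo h ∧ g = h ^ p := by
  have ha₁ : coeff 1 f ≠ 0 := by
    intro h1
    obtain ⟨h, -, hfh⟩ := hf.exists_pow_eq_of_coeff_one_eq_zero h1
    exact hpow ⟨h, hfh⟩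
  set e : (ZMod p)⟦X⟧ := (1 + X) ^ (coeff 1 f).val
  have he : IsOneUnitEndo e := isOneUnitEndo_one_add_X_pow _
  set g := e⁻¹ * f
  have hfg : f = e * g := by
    rw [← mul_assoc, PowerSeries.mul_inv_cancel _ (by rw [he.1]; exact one_ne_zero), one_mul]
  have hg0 : constantCoeff g = 1 := by simpa [he.1, hf.1] using (congrArg constantCoeff hfg).symm
  have hg : IsOneUnitEndo g := he.of_mul_left (hfg ▸ hf) hg0
  have hg1 : coeff 1 g = 0 := by
    have h := congrArg (coeff 1) hfg
    rwa [coeff_one_mul, coeff_one_one_add_X_pow, ZMod.natCast_zmod_val, he.1, hg0, mul_one,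
      mul_one, left_eq_add] at h
  obtain ⟨h, hh, hgh⟩ := hg.exists_pow_eq_of_coeff_one_eq_zero hg1
  exact ⟨ha₁, g, hg, hfg, hg1, h, hh, hgh⟩

/-- If an endomorphism `f` of the 1-units is neither rational in `x` nor a `p`-th power in
`F_p[[x]]`, then its linear coefficient `a₁` is nonzero, and the endomorphism `g` defined by
`f(1+x) = (1+x)^{a₁} g(1+x)` has zero linear coefficient, hence is the `p`-th power of an
endomorphism. -/
theorem not_rational_not_pth_power {p : ℕ} [Fact p.Prime]
    (f : PowerSeries (ZMod p)) (hf : IsOneUnitEndo f)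
    (hrat : ¬ IsRationalPS f) (hpow : ¬ ∃ g : PowerSeries (ZMod p), f = g ^ p) :
    coeff (R := ZMod p) 1 f ≠ 0 ∧
      ∃ g : PowerSeries (ZMod p), IsOneUnitEndo g ∧
        f = (1 + X) ^ (ZMod.val (coeff (R := ZMod p) 1 f)) * g ∧
        coeff (R := ZMod p) 1 g = 0 ∧
        ∃ h : PowerSeries (ZMod p), IsOneUnitEndo h ∧ g = h ^ p :=
  not_rational_not_pth_power_general f hf hpow
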